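/- arXiv:2511.08347 — 4 statements merged into one kernel-verified Lean document; each statement's English description precedes it below -/
import Mathlib

section
/- Let g₀, g₁ ∈ L¹(ℝ). Then the set P = { ( ∫ g₁(s)·δ(s) ds , ∫ g₀(s)·δ(s) ds ) : δ ∈ D } ⊆ ℝ² is convex and compact in the Euclidean topology on ℝ². -/
/-!
Write `G = (g₁, g₀)`, so that the achievable set is `P = {∫ δ • G : δ a test}`. For a functional
`u` on the plane, `u (∫ δ • G) = ∫ δ · u ∘ G ≤ ∫ (u ∘ G)⁺ =: M u`, with equality for the
Neyman–Pearson test `1{u ∘ G > 0}`; so `P` lies in the compact set `K = {p | ∀ u, u p ≤ M u}`,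
and `P` is convex. It remains to prove `K ⊆ P`, and since `P` is convex and `K` compact it is
enough to do this for frontier points `z` of `K`. As `M` is continuous and positively
homogeneous, a point with `u z < M u` for all `u ≠ 0` is interior, so `u z = M u` for some
`u ≠ 0`. Testing `z` against the constraints at `u + ε w` and letting `ε → 0⁺` bounds `w z` by
the right derivative of `M` at `u` in direction `w`, which is the value of `w` at the test that
breaks the ties on `{u ∘ G = 0}` by the sign of `w ∘ G`. Taking `w = ± v` with `v` independent
of `u` puts `z` on the segment between two points of `P`.
-/

open MeasureTheory

noncomputable section

def IsClassifier (δ : ℝ → ℝ) : Prop :=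
  Measurable δ ∧ ∀ᵐ s ∂(volume : Measure ℝ), 0 ≤ δ s ∧ δ s ≤ 1

open Filter Topology

def posPartRightDeriv (h k : ℝ) : ℝ := if 0 < h then k else if h = 0 then max k 0 else 0

theorem eventually_posPart_slope_eq (h k : ℝ) :
    ∀ᶠ ε in 𝓝[>] (0 : ℝ),
      (max (h + ε * k) 0 - max h 0) / ε = posPartRightDeriv h k := by
  have hsmall : ∀ᶠ ε in 𝓝[>] (0 : ℝ), h = 0 ∨ |ε * k| < |h| := by
    rcases eq_or_ne h 0 with rfl | hh
    · exact Eventually.of_forall fun _ => Or.inl rfl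
    have hlim : Tendsto (fun ε : ℝ => |ε * k|) (𝓝 0) (𝓝 0) := by
      simpa using (continuous_id.mul continuous_const).abs.tendsto (0 : ℝ)
    exact ((hlim.eventually (gt_mem_nhds (abs_pos.2 hh))).filter_mono nhdsWithin_le_nhds).mono
      fun _ hε => Or.inr hε
  filter_upwards [self_mem_nhdsWithin, hsmall] with ε (hε : 0 < ε) hs
  obtain ⟨hεk₁, hεk₂⟩ := abs_le.1 (le_refl |ε * k|)
  rcases lt_trichotomy h 0 with hneg | rfl | hpos
  · have hsum : h + ε * k < 0 := by
      rcases hs with h0 | hs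
      · exact absurd h0 hneg.ne
      · rw [abs_of_neg hneg] at hs; linarith
    simp [posPartRightDeriv, hneg.not_gt, hneg.ne, max_eq_right hsum.le, max_eq_right hneg.le]
  · have hmax : max (ε * k) 0 = ε * max k 0 := by rw [mul_max_of_nonneg _ _ hε.le, mul_zero]
    simp [posPartRightDeriv, hmax, hε.ne']
  · have hsum : 0 < h + ε * k := by
      rcases hs with h0 | hs
      · exact absurd h0 hpos.ne'
      · rw [abs_of_pos hpos] at hs; linarith
    simp [posPartRightDeriv, hpos, max_eq_left hsum.le, max_eq_left hpos.le, hε.ne']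

/-- The Neyman–Pearson test for `h` with ties broken by the sign of `k`: it maximises `h · δ`
and, among those maximisers, `k · δ`. -/
def lexStep (h k : ℝ) : ℝ := if 0 < h ∨ h = 0 ∧ 0 < k then 1 else 0

theorem mul_lexStep_left (h k : ℝ) : h * lexStep h k = max h 0 := by
  unfold lexStep
  split_ifs with H
  · rcases H with H | ⟨rfl, -⟩ <;> simp [*, le_of_lt]
  · push Not at H
    simp [H.1]

theorem mul_lexStep_right (h k : ℝ) : k * lexStep h k = posPartRightDeriv h k := by
  unfold lexStep posPartRightDeriv
  split_ifs <;> simp_all [le_of_lt]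

theorem mem_segment_of_apply_eq_of_apply_le {𝕜 E F : Type*} [Field 𝕜] [LinearOrder 𝕜]
    [IsStrictOrderedRing 𝕜] [AddCommGroup E] [Module 𝕜 E] [FunLike F E 𝕜]
    [LinearMapClass F 𝕜 E 𝕜] {u v : F} (huv : ∀ p, u p = 0 → v p = 0 → p = 0) {x y z : E}
    (hx : u x = u z) (hy : u y = u z) (hxz : v x ≤ v z) (hzy : v z ≤ v y) :
    z ∈ segment 𝕜 x y := by
  rw [mem_segment_iff_sameRay]
  set a := v (z - x)
  set b := v (y - z)
  have ha : 0 ≤ a := by simp [a, hxz]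
  have hb : 0 ≤ b := by simp [b, hzy]
  have hab : b • (z - x) = a • (y - z) := by
    rw [← sub_eq_zero]
    refine huv _ (by simp [hx, hy]) ?_
    simp only [map_sub, map_smul, smul_eq_mul, a, b]
    ring
  rcases ha.eq_or_lt with ha0 | ha0
  · exact Or.inl (huv _ (by simp [hx]) ha0.symm)
  rcases hb.eq_or_lt with hb0 | hb0
  · exact Or.inr (Or.inl (huv _ (by simp [hy]) hb0.symm))
  · exact Or.inr (Or.inr ⟨b, a, hb0, ha0, hab⟩)

section Geometry

variable {E : Type*} [NormedAddCommGroup E] [NormedSpace ℝ E]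

theorem exists_nonneg_add_smul_mem_frontier {K : Set E} (hK : IsCompact K) {p : E}
    (hp : p ∈ K) {d : E} (hd : d ≠ 0) : ∃ t : ℝ, 0 ≤ t ∧ p + t • d ∈ frontier K := by
  have hline : Continuous fun t : ℝ => p + t • d := by fun_prop
  have hT : IsCompact ((fun t : ℝ => p + t • d) ⁻¹' K) :=
    ((Homeomorph.addLeft p).isClosedEmbedding.comp
      (isClosedEmbedding_smul_left hd)).isCompact_preimage hK
  obtain ⟨t, ht, hmax⟩ := hT.exists_isMaxOn (f := id) ⟨0, by simpa using hp⟩ continuousOn_id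
  refine ⟨t, hmax (show (0 : ℝ) ∈ _ by simpa using hp), ?_⟩
  rw [hK.isClosed.frontier_eq]
  refine ⟨ht, fun hint => ?_⟩
  have hnear : ∀ᶠ s in 𝓝 t, p + s • d ∈ K :=
    hline.continuousAt.preimage_mem_nhds (mem_interior_iff_mem_nhds.1 hint)
  obtain ⟨s, hs, hts⟩ := ((hnear.filter_mono nhdsWithin_le_nhds).and
    (self_mem_nhdsWithin : Set.Ioi t ∈ 𝓝[>] t)).exists
  exact (hmax hs).not_gt hts

theorem IsCompact.subset_of_frontier_subset [Nontrivial E] {K P : Set E} (hK : IsCompact K)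
    (hP : Convex ℝ P) (h : frontier K ⊆ P) : K ⊆ P := by
  intro p hp
  obtain ⟨d, hd⟩ := exists_ne (0 : E)
  obtain ⟨t, ht, hfwd⟩ := exists_nonneg_add_smul_mem_frontier hK hp hd
  obtain ⟨t', ht', hbwd⟩ := exists_nonneg_add_smul_mem_frontier hK hp (neg_ne_zero.2 hd)
  refine hP.segment_subset (h hbwd) (h hfwd) ?_
  rw [mem_segment_iff_sameRay]
  simpa using ((SameRay.refl d).nonneg_smul_left ht').nonneg_smul_right ht

def halfspaceInter (M : StrongDual ℝ E → ℝ) : Set E := {p | ∀ u, u p ≤ M u}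

theorem isClosed_halfspaceInter (M : StrongDual ℝ E → ℝ) : IsClosed (halfspaceInter M) := by
  simp only [halfspaceInter, Set.ofPred_forall]
  exact isClosed_iInter fun u => isClosed_le u.continuous continuous_const

theorem halfspaceInter_mem_nhds [FiniteDimensional ℝ E] [Nontrivial E]
    {M : StrongDual ℝ E → ℝ} (hM : Continuous M)
    (hhom : ∀ c : ℝ, 0 < c → ∀ u, M (c • u) = c * M u) {z : E} (hz : ∀ u ≠ 0, u z < M u) :
    halfspaceInter M ∈ 𝓝 z := by
  have hM0 : M 0 = 0 := by
    have h2 := hhom 2 two_pos 0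
    rw [smul_zero] at h2
    linarith
  set S := Metric.sphere (0 : StrongDual ℝ E) 1
  have hS : S.Nonempty := by
    obtain ⟨x, hx⟩ := exists_ne (0 : E)
    obtain ⟨u, hu, -⟩ := exists_dual_vector ℝ x (norm_ne_zero_iff.2 hx)
    exact ⟨u, by simpa [S] using hu⟩
  obtain ⟨u₀, hu₀, hmin⟩ := (isCompact_sphere (0 : StrongDual ℝ E) 1).exists_isMinOn hS
    (f := fun u => M u - u z) (by fun_prop)
  have hη : 0 < M u₀ - u₀ z := sub_pos.2 (hz u₀ (Metric.ne_of_mem_sphere hu₀ one_ne_zero))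
  refine Metric.mem_nhds_iff.2 ⟨_, hη, fun w hw u => ?_⟩
  rcases eq_or_ne u 0 with rfl | hu
  · simp [hM0]
  have hr : 0 < ‖u‖ := norm_pos_iff.2 hu
  set û := ‖u‖⁻¹ • u
  have hû : û ∈ S := by simp [S, û, norm_smul, hr.ne']
  have hshift : û w ≤ û z + dist w z := by
    have h := (le_abs_self _).trans (û.le_opNorm (w - z))
    rw [map_sub, show ‖û‖ = 1 by simpa [S] using hû, one_mul, ← dist_eq_norm] at h
    linarith
  have hûw : û w ≤ M û := by
    have hmin' : M u₀ - u₀ z ≤ M û - û z := hmin hû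
    rw [Metric.mem_ball] at hw
    linarith
  calc u w = ‖u‖ * û w := by simp [û, hr.ne']
    _ ≤ ‖u‖ * M û := mul_le_mul_of_nonneg_left hûw hr.le
    _ = M u := by rw [← hhom _ hr, smul_inv_smul₀ hr.ne']

theorem isCompact_halfspaceInter (M : StrongDual ℝ (ℝ × ℝ) → ℝ) :
    IsCompact (halfspaceInter M) := by
  refine Metric.isCompact_of_isClosed_isBounded (isClosed_halfspaceInter M) ?_
  set fst := ContinuousLinearMap.fst ℝ ℝ ℝ
  set snd := ContinuousLinearMap.snd ℝ ℝ ℝ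
  refine isBounded_iff_forall_norm_le.2
    ⟨max (max (M fst) (M (-fst))) (max (M snd) (M (-snd))), fun p hp => ?_⟩
  have h₁ := hp fst
  have h₂ := hp (-fst)
  have h₃ := hp snd
  have h₄ := hp (-snd)
  simp only [fst, snd, neg_apply, ContinuousLinearMap.coe_fst',
    ContinuousLinearMap.coe_snd'] at h₁ h₂ h₃ h₄
  have habs : ∀ x a b : ℝ, x ≤ a → -x ≤ b → |x| ≤ max a b := fun x a b h h' =>
    abs_le.2 ⟨by linarith [le_max_right a b], h.trans (le_max_left a b)⟩
  rw [Prod.norm_def, Real.norm_eq_abs, Real.norm_eq_abs]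
  exact max_le_max (habs _ _ _ h₁ h₂) (habs _ _ _ h₃ h₄)

end Geometry

section Rates

variable {E : Type*} [NormedAddCommGroup E] [NormedSpace ℝ E]
  {α : Type*} [MeasurableSpace α] {μ : Measure α}

def IsRandomizedTest (μ : Measure α) (δ : α → ℝ) : Prop :=
  Measurable δ ∧ ∀ᵐ s ∂μ, 0 ≤ δ s ∧ δ s ≤ 1

def achievableRates (μ : Measure α) (G : α → E) : Set E :=
  {p | ∃ δ, IsRandomizedTest μ δ ∧ p = ∫ s, δ s • G s ∂μ}

def supportFun (μ : Measure α) (G : α → E) (u : StrongDual ℝ E) : ℝ :=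
  ∫ s, max (u (G s)) 0 ∂μ

variable {G : α → E}

theorem IsRandomizedTest.integrable_smul {δ : α → ℝ} (hδ : IsRandomizedTest μ δ)
    (hG : Integrable G μ) : Integrable (fun s => δ s • G s) μ :=
  hG.bdd_smul 1 hδ.1.aestronglyMeasurable <| hδ.2.mono fun s hs => by
    rw [Real.norm_eq_abs, abs_le]
    constructor <;> linarith [hs.1, hs.2]

theorem IsRandomizedTest.apply_integral_smul [CompleteSpace E] {δ : α → ℝ}
    (hδ : IsRandomizedTest μ δ) (hG : Integrable G μ) (u : StrongDual ℝ E) :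
    u (∫ s, δ s • G s ∂μ) = ∫ s, δ s * u (G s) ∂μ := by
  rw [← u.integral_comp_comm (hδ.integrable_smul hG)]
  simp

theorem convex_achievableRates [CompleteSpace E] (hG : Integrable G μ) :
    Convex ℝ (achievableRates μ G) := by
  rintro _ ⟨δ₁, hδ₁, rfl⟩ _ ⟨δ₂, hδ₂, rfl⟩ a b ha hb hab
  refine ⟨fun s => a * δ₁ s + b * δ₂ s, ⟨(hδ₁.1.const_mul a).add (hδ₂.1.const_mul b), ?_⟩, ?_⟩
  · filter_upwards [hδ₁.2, hδ₂.2] with s h₁ h₂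
    constructor <;> nlinarith [h₁.1, h₁.2, h₂.1, h₂.2]
  · simp only [add_smul, mul_smul]
    rw [← integral_smul, ← integral_smul, ← integral_add]
    exacts [(hδ₁.integrable_smul hG).smul a, (hδ₂.integrable_smul hG).smul b]

theorem achievableRates_congr_ae {G' : α → E} (h : G =ᵐ[μ] G') :
    achievableRates μ G = achievableRates μ G' := by
  ext p
  refine exists_congr fun δ => and_congr_right fun _ => ?_
  rw [integral_congr_ae (h.mono fun s hs => (by rw [hs] : δ s • G s = δ s • G' s))]

theorem supportFun_smul {c : ℝ} (hc : 0 ≤ c) (u : StrongDual ℝ E) :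
    supportFun μ G (c • u) = c * supportFun μ G u := by
  simp only [supportFun, smul_apply, smul_eq_mul, ← integral_const_mul,
    mul_max_of_nonneg _ _ hc, mul_zero]

theorem lipschitzWith_supportFun (hG : Integrable G μ) :
    LipschitzWith (∫ s, ‖G s‖ ∂μ).toNNReal (supportFun μ G) := by
  refine LipschitzWith.of_dist_le' fun u v => ?_
  rw [Real.dist_eq, dist_eq_norm, supportFun, supportFun,
    ← integral_sub (u.integrable_comp hG).pos_part (v.integrable_comp hG).pos_part,
    ← integral_mul_const, ← Real.norm_eq_abs]
  refine norm_integral_le_of_norm_le (hG.norm.mul_const _) (Eventually.of_forall fun s => ?_)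
  calc ‖max (u (G s)) 0 - max (v (G s)) 0‖ ≤ |u (G s) - v (G s)| :=
        abs_max_sub_max_le_abs _ _ _
    _ = ‖(u - v) (G s)‖ := by simp [Real.norm_eq_abs]
    _ ≤ ‖G s‖ * ‖u - v‖ := by rw [mul_comm]; exact (u - v).le_opNorm _

theorem achievableRates_subset_halfspaceInter [CompleteSpace E] (hG : Integrable G μ) :
    achievableRates μ G ⊆ halfspaceInter (supportFun μ G) := by
  rintro _ ⟨δ, hδ, rfl⟩ u
  rw [hδ.apply_integral_smul hG]
  refine integral_mono_ae (hδ.integrable_smul (u.integrable_comp hG))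
    (u.integrable_comp hG).pos_part ?_
  filter_upwards [hδ.2] with s hs
  rcases le_total 0 (u (G s)) with h | h
  · exact (mul_le_of_le_one_left h hs.2).trans (le_max_left _ _)
  · exact (mul_nonpos_of_nonneg_of_nonpos hs.1 h).trans (le_max_right _ _)

theorem apply_le_integral_posPartRightDeriv (hG : Integrable G μ) {z : E}
    (hz : z ∈ halfspaceInter (supportFun μ G)) {u : StrongDual ℝ E}
    (hu : u z = supportFun μ G u) (w : StrongDual ℝ E) :
    w z ≤ ∫ s, posPartRightDeriv (u (G s)) (w (G s)) ∂μ := by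
  set slope : ℝ → α → ℝ := fun ε s => (max (u (G s) + ε * w (G s)) 0 - max (u (G s)) 0) / ε
  have hpos : ∀ ε, Integrable (fun s => max (u (G s) + ε * w (G s)) 0) μ := fun ε =>
    ((u.integrable_comp hG).add ((w.integrable_comp hG).const_mul ε)).pos_part
  have hint : ∀ ε, Integrable (slope ε) μ := fun ε =>
    ((hpos ε).sub (u.integrable_comp hG).pos_part).div_const ε
  have hle : ∀ ε > 0, w z ≤ ∫ s, slope ε s ∂μ := fun ε hε => by
    have hcut := hz (u + ε • w)
    simp only [supportFun, add_apply, smul_apply, smul_eq_mul] at hcut hu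
    rw [integral_div, integral_sub (hpos ε) (u.integrable_comp hG).pos_part, le_div_iff₀ hε]
    linarith
  have hlim : Tendsto (fun ε => ∫ s, slope ε s ∂μ) (𝓝[>] 0)
      (𝓝 (∫ s, posPartRightDeriv (u (G s)) (w (G s)) ∂μ)) := by
    refine tendsto_integral_filter_of_dominated_convergence (fun s => |w (G s)|)
      (Eventually.of_forall fun ε => (hint ε).aestronglyMeasurable) ?_
      (w.integrable_comp hG).abs (Eventually.of_forall fun s =>
        tendsto_nhds_of_eventually_eq (eventually_posPart_slope_eq _ _))
    filter_upwards [self_mem_nhdsWithin] with ε (hε : 0 < ε)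
    refine Eventually.of_forall fun s => ?_
    rw [Real.norm_eq_abs, abs_div, abs_of_pos hε, div_le_iff₀ hε]
    calc |max (u (G s) + ε * w (G s)) 0 - max (u (G s)) 0|
        ≤ |u (G s) + ε * w (G s) - u (G s)| := abs_max_sub_max_le_abs _ _ _
      _ = |w (G s)| * ε := by rw [add_sub_cancel_left, abs_mul, abs_of_pos hε, mul_comm]
  exact ge_of_tendsto hlim (eventually_nhdsWithin_of_forall hle)

theorem exists_mem_achievableRates_apply_eq_apply_le [CompleteSpace E] (hG : Integrable G μ)
    (hGm : StronglyMeasurable G) {z : E} (hz : z ∈ halfspaceInter (supportFun μ G))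
    {u : StrongDual ℝ E} (hu : u z = supportFun μ G u) (w : StrongDual ℝ E) :
    ∃ e ∈ achievableRates μ G, u e = u z ∧ w z ≤ w e := by
  set δ : α → ℝ := fun s => lexStep (u (G s)) (w (G s))
  have hu' : Measurable fun s => u (G s) := (u.continuous.comp_stronglyMeasurable hGm).measurable
  have hw' : Measurable fun s => w (G s) := (w.continuous.comp_stronglyMeasurable hGm).measurable
  have hδ : IsRandomizedTest μ δ := by
    refine ⟨Measurable.ite ((measurableSet_lt measurable_const hu').union
      ((measurableSet_eq_fun hu' measurable_const).inter (measurableSet_lt measurable_const hw')))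
      measurable_const measurable_const, Eventually.of_forall fun s => ?_⟩
    simp only [δ, lexStep]
    split_ifs <;> norm_num
  refine ⟨_, ⟨δ, hδ, rfl⟩, ?_, ?_⟩
  · simp only [hδ.apply_integral_smul hG, hu, supportFun, δ, mul_comm _ (u _), mul_lexStep_left]
  · simpa only [hδ.apply_integral_smul hG, δ, mul_comm _ (w _), mul_lexStep_right]
      using apply_le_integral_posPartRightDeriv hG hz hu w

end Rates

section Plane

variable {α : Type*} [MeasurableSpace α] {μ : Measure α} {G : α → ℝ × ℝ}

theorem exists_dual_jointly_injective {u : StrongDual ℝ (ℝ × ℝ)} (hu : u ≠ 0) :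
    ∃ v : StrongDual ℝ (ℝ × ℝ), ∀ p, u p = 0 → v p = 0 → p = 0 := by
  have hdec : ∀ p : ℝ × ℝ, u p = p.1 * u (1, 0) + p.2 * u (0, 1) := fun p => by
    calc u p = u (p.1 • ((1 : ℝ), (0 : ℝ)) + p.2 • ((0 : ℝ), (1 : ℝ))) := by
          congr 1; ext <;> simp
      _ = p.1 * u (1, 0) + p.2 * u (0, 1) := by
          rw [map_add, map_smul, map_smul, smul_eq_mul, smul_eq_mul]
  by_cases h₂ : u (0, 1) = 0
  · have h₁ : u (1, 0) ≠ 0 := fun h₁ =>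
      hu (ContinuousLinearMap.ext fun p => by simp [hdec p, h₁, h₂])
    refine ⟨ContinuousLinearMap.snd ℝ ℝ ℝ, fun p hup hvp => ?_⟩
    simp only [ContinuousLinearMap.coe_snd'] at hvp
    rw [hdec, hvp, h₂] at hup
    exact Prod.ext (by simpa [h₁] using hup) hvp
  · refine ⟨ContinuousLinearMap.fst ℝ ℝ ℝ, fun p hup hvp => ?_⟩
    simp only [ContinuousLinearMap.coe_fst'] at hvp
    rw [hdec, hvp] at hup
    exact Prod.ext hvp (by simpa [h₂] using hup)

theorem mem_achievableRates_of_apply_eq_supportFun (hG : Integrable G μ)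
    (hGm : StronglyMeasurable G) {z : ℝ × ℝ} (hz : z ∈ halfspaceInter (supportFun μ G))
    {u : StrongDual ℝ (ℝ × ℝ)} (hu0 : u ≠ 0) (hu : u z = supportFun μ G u) :
    z ∈ achievableRates μ G := by
  obtain ⟨v, hv⟩ := exists_dual_jointly_injective hu0
  obtain ⟨e₁, he₁, hu₁, hv₁⟩ := exists_mem_achievableRates_apply_eq_apply_le hG hGm hz hu v
  obtain ⟨e₂, he₂, hu₂, hv₂⟩ := exists_mem_achievableRates_apply_eq_apply_le hG hGm hz hu (-v)
  refine (convex_achievableRates hG).segment_subset he₂ he₁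
    (mem_segment_of_apply_eq_of_apply_le hv hu₂ hu₁ ?_ hv₁)
  simpa using hv₂

theorem frontier_halfspaceInter_subset_achievableRates (hG : Integrable G μ)
    (hGm : StronglyMeasurable G) :
    frontier (halfspaceInter (supportFun μ G)) ⊆ achievableRates μ G := by
  intro z hz
  have hzK : z ∈ halfspaceInter (supportFun μ G) :=
    (isClosed_halfspaceInter _).frontier_subset hz
  by_contra hzP
  have hlt : ∀ u ≠ 0, u z < supportFun μ G u := fun u hu0 =>
    (hzK u).lt_of_ne fun hu => hzP (mem_achievableRates_of_apply_eq_supportFun hG hGm hzK hu0 hu)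
  exact hz.2 <| mem_interior_iff_mem_nhds.2 <| halfspaceInter_mem_nhds
    (lipschitzWith_supportFun hG).continuous (fun c hc u => supportFun_smul hc.le u) hlt

theorem achievableRates_eq_halfspaceInter (hG : Integrable G μ) (hGm : StronglyMeasurable G) :
    achievableRates μ G = halfspaceInter (supportFun μ G) :=
  (achievableRates_subset_halfspaceInter hG).antisymm <|
    (isCompact_halfspaceInter _).subset_of_frontier_subset (convex_achievableRates hG)
      (frontier_halfspaceInter_subset_achievableRates hG hGm)

theorem isCompact_achievableRates (hG : Integrable G μ) : IsCompact (achievableRates μ G) := by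
  rw [achievableRates_congr_ae hG.1.ae_eq_mk,
    achievableRates_eq_halfspaceInter (hG.congr hG.1.ae_eq_mk) hG.1.stronglyMeasurable_mk]
  exact isCompact_halfspaceInter _

end Plane

theorem setOf_isClassifier_eq_achievableRates {g₀ g₁ : ℝ → ℝ} (hg₀ : Integrable g₀ volume)
    (hg₁ : Integrable g₁ volume) :
    {p : ℝ × ℝ | ∃ δ : ℝ → ℝ, IsClassifier δ ∧ p = (∫ s, g₁ s * δ s, ∫ s, g₀ s * δ s)} =
      achievableRates volume (fun s => (g₁ s, g₀ s)) := by
  ext p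
  refine exists_congr fun δ => and_congr_right fun (hδ : IsRandomizedTest volume δ) => ?_
  simp only [Prod.smul_mk, smul_eq_mul]
  rw [integral_pair (f := fun s => δ s * g₁ s) (g := fun s => δ s * g₀ s)
    (hδ.integrable_smul hg₁) (hδ.integrable_smul hg₀)]
  simp only [mul_comm (δ _)]

/-- For `g₀, g₁ ∈ L¹(ℝ)`, the set
`P = {(∫ g₁ δ, ∫ g₀ δ) : δ a classifier} ⊆ ℝ²` is convex and compact in the
Euclidean topology on `ℝ²`. -/
theorem achievable_rates_convex_compact (g₀ g₁ : ℝ → ℝ)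
    (hg₀ : Integrable g₀ (volume : Measure ℝ)) (hg₁ : Integrable g₁ (volume : Measure ℝ)) :
    Convex ℝ {p : ℝ × ℝ | ∃ δ : ℝ → ℝ, IsClassifier δ ∧
        p = (∫ s, g₁ s * δ s, ∫ s, g₀ s * δ s)} ∧
    IsCompact {p : ℝ × ℝ | ∃ δ : ℝ → ℝ, IsClassifier δ ∧
        p = (∫ s, g₁ s * δ s, ∫ s, g₀ s * δ s)} := by
  rw [setOf_isClassifier_eq_achievableRates hg₀ hg₁]
  exact ⟨convex_achievableRates (hg₁.prodMk hg₀), isCompact_achievableRates (hg₁.prodMk hg₀)⟩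

end
end

section
/- Let g₀, g₁ ∈ L¹(ℝ) be probability densities, let F : ℝ → ℝ be continuous, let r > 0, A₁, A₀, B₀, B₁ ∈ ℝ, and q ∈ (0, 1]. With TPR, FPR, Δ, π, u_D, v defined as in the designer's problem, the feasible set D_q = { δ ∈ D : v(δ) ≤ q } is nonempty and weak-* compact, and there exists δ* ∈ D_q with u_D(δ*) ≥ u_D(δ) for every δ ∈ D_q; that is, the designer's quota-constrained problem admits an optimal classifier. -/
open MeasureTheory

noncomputable section

/-- The set `D` of all classifiers, regarded as a subset of `L∞(ℝ)` viewed as the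
Banach dual of `L¹(ℝ)` with its weak-* topology. -/
def classifierSet :
    Set (WeakDual ℝ (Lp ℝ 1 (volume : Measure ℝ))) :=
  {φ | ∃ δ : ℝ → ℝ, IsClassifier δ ∧
    ∀ f : Lp ℝ 1 (volume : Measure ℝ), φ f = ∫ s, f s * δ s}

/-- True positive rate of the classifier represented by `φ`: the pairing of `φ`
with the density `g₁ ∈ L¹(ℝ)` (i.e. `∫ g₁ δ`). -/
def TPR (g₁ : Lp ℝ 1 (volume : Measure ℝ))
    (φ : WeakDual ℝ (Lp ℝ 1 (volume : Measure ℝ))) : ℝ := φ g₁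

/-- False positive rate: the pairing with `g₀` (i.e. `∫ g₀ δ`). -/
def FPR (g₀ : Lp ℝ 1 (volume : Measure ℝ))
    (φ : WeakDual ℝ (Lp ℝ 1 (volume : Measure ℝ))) : ℝ := φ g₀

/-- Equilibrium prevalence `π(δ) = F(r·(TPR(δ) − FPR(δ)))`. -/
def prevalence (F : ℝ → ℝ) (r : ℝ) (g₀ g₁ : Lp ℝ 1 (volume : Measure ℝ))
    (φ : WeakDual ℝ (Lp ℝ 1 (volume : Measure ℝ))) : ℝ :=
  F (r * (TPR g₁ φ - FPR g₀ φ))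

/-- Designer payoff
`u_D(δ) = π(δ)·(TPR(δ)·A₁ + (1−TPR(δ))·A₀) + (1−π(δ))·(FPR(δ)·B₀ + (1−FPR(δ))·B₁)`. -/
def designerPayoff (F : ℝ → ℝ) (r A₁ A₀ B₀ B₁ : ℝ)
    (g₀ g₁ : Lp ℝ 1 (volume : Measure ℝ))
    (φ : WeakDual ℝ (Lp ℝ 1 (volume : Measure ℝ))) : ℝ :=
  prevalence F r g₀ g₁ φ * (TPR g₁ φ * A₁ + (1 - TPR g₁ φ) * A₀)
    + (1 - prevalence F r g₀ g₁ φ) * (FPR g₀ φ * B₀ + (1 - FPR g₀ φ) * B₁)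

/-- Expected rewarded share `v(δ) = π(δ)·TPR(δ) + (1−π(δ))·FPR(δ)`. -/
def rewardedShare (F : ℝ → ℝ) (r : ℝ) (g₀ g₁ : Lp ℝ 1 (volume : Measure ℝ))
    (φ : WeakDual ℝ (Lp ℝ 1 (volume : Measure ℝ))) : ℝ :=
  prevalence F r g₀ g₁ φ * TPR g₁ φ + (1 - prevalence F r g₀ g₁ φ) * FPR g₀ φ

/-! A classifier `δ` acts on `L¹` by `f ↦ ∫ f δ`, and a functional `φ` on `L¹` is of this
form with `0 ≤ δ ≤ 1` exactly when `0 ≤ φ 1ₛ ≤ |s|` for every set `s` of finite measure.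
Necessity is clear; conversely, continuity of `φ` makes `s ↦ φ 1ₛ` countably additive, hence a
measure below Lebesgue measure, and `δ` is its Radon–Nikodym density. The condition is weak-*
closed and the classifiers lie in the unit ball, so by Banach–Alaoglu they form a weak-* compact
set. The quantities `v` and `u_D` are continuous functions of the evaluations at `g₀` and `g₁`,
so `D_q` is compact, it contains `δ = 0`, and `u_D` attains its maximum on it.
-/

open MeasureTheory Filter Topology Set
open scoped ENNReal Function symmDiff

section Measure

variable {α : Type*} [MeasurableSpace α] {μ : Measure α}

theorem tendsto_measure_iUnion_sdiff_biUnion {ι : Type*} [Countable ι] {t : ι → Set α}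
    (ht : ∀ i, MeasurableSet (t i)) (hμU : μ (⋃ i, t i) ≠ ∞) :
    Tendsto (fun S : Finset ι => μ ((⋃ i, t i) \ ⋃ i ∈ S, t i)) atTop (𝓝 0) := by
  have hanti : Antitone fun S : Finset ι => (⋃ i, t i) \ ⋃ i ∈ S, t i :=
    fun S T hST => sdiff_subset_sdiff_right (biUnion_subset_biUnion_left hST)
  have hempty : ⋂ S : Finset ι, ((⋃ i, t i) \ ⋃ i ∈ S, t i) = ∅ := by
    refine eq_empty_of_forall_notMem fun a ha => ?_
    obtain ⟨i, hi⟩ := mem_iUnion.1 (mem_iInter.1 ha ∅).1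
    exact (mem_iInter.1 ha {i}).2 (mem_biUnion (Finset.mem_singleton_self i) hi)
  simpa only [hempty, measure_empty, Function.comp_def] using tendsto_measure_iInter_atTop
    (fun S => ((MeasurableSet.iUnion ht).diff
      (S.measurableSet_biUnion fun i _ => ht i)).nullMeasurableSet)
    hanti ⟨∅, measure_ne_top_of_subset sdiff_subset hμU⟩

variable [SigmaFinite μ]

theorem measure_inter_disjointed_spanningSets_ne_top (s : Set α) (n : ℕ) :
    μ (s ∩ disjointed (spanningSets μ) n) ≠ ∞ :=
  measure_ne_top_of_subset (inter_subset_right.trans (disjointed_subset _ n))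
    (measure_spanningSets_lt_top μ n).ne

theorem iUnion_inter_disjointed_spanningSets (s : Set α) :
    ⋃ n, s ∩ disjointed (spanningSets μ) n = s := by
  rw [← inter_iUnion, iUnion_disjointed, iUnion_spanningSets, inter_univ]

theorem pairwise_disjoint_inter_disjointed_spanningSets (s : Set α) :
    Pairwise (Disjoint on fun n => s ∩ disjointed (spanningSets μ) n) :=
  fun _ _ hmn => (disjoint_disjointed _ hmn).mono inter_subset_right inter_subset_right

end Measure

section IndicatorConstLp

variable {α E : Type*} [MeasurableSpace α] {μ : Measure α} [NormedAddCommGroup E]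
  {p : ℝ≥0∞} {s : Set α}

theorem indicatorConstLp_smul {𝕜 : Type*} [NormedField 𝕜] [NormedSpace 𝕜 E]
    (hs : MeasurableSet s) (hμs : μ s ≠ ∞) (c : 𝕜) (e : E) :
    indicatorConstLp p hs hμs (c • e) = c • indicatorConstLp p hs hμs e := by
  refine Lp.ext (indicatorConstLp_coeFn.trans ?_)
  filter_upwards [Lp.coeFn_smul c (indicatorConstLp p hs hμs e),
    indicatorConstLp_coeFn (p := p) (hs := hs) (hμs := hμs) (c := e)] with a hsmul hind
  rw [hsmul, Pi.smul_apply, hind, indicator_const_smul_apply]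

theorem finsetSum_indicatorConstLp {ι : Type*} {t : ι → Set α} (ht : ∀ i, MeasurableSet (t i))
    (hμt : ∀ i, μ (t i) ≠ ∞) (S : Finset ι) (hd : (S : Set ι).PairwiseDisjoint t)
    (hU : MeasurableSet (⋃ i ∈ S, t i)) (hμU : μ (⋃ i ∈ S, t i) ≠ ∞) (c : E) :
    ∑ i ∈ S, indicatorConstLp p (ht i) (hμt i) c = indicatorConstLp p hU hμU c := by
  refine Lp.ext ((Lp.coeFn_fun_finsetSum _ _).trans ?_)
  filter_upwards [indicatorConstLp_coeFn (p := p) (hs := hU) (hμs := hμU) (c := c),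
    (eventually_all_finset S).2 fun i _ =>
      indicatorConstLp_coeFn (p := p) (hs := ht i) (hμs := hμt i) (c := c)] with a hUa hia
  rw [hUa, Finset.indicator_biUnion_apply S t hd, Finset.sum_congr rfl hia]

theorem hasSum_indicatorConstLp_iUnion [Fact (1 ≤ p)] (hp : p ≠ ∞) {ι : Type*} [Countable ι]
    {t : ι → Set α} (ht : ∀ i, MeasurableSet (t i)) (hμt : ∀ i, μ (t i) ≠ ∞)
    (hd : Pairwise (Disjoint on t)) (hμU : μ (⋃ i, t i) ≠ ∞) (c : E) :
    HasSum (fun i => indicatorConstLp p (ht i) (hμt i) c)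
      (indicatorConstLp p (MeasurableSet.iUnion ht) hμU c) := by
  have hpartial (S : Finset ι) := finsetSum_indicatorConstLp (p := p) ht hμt S
    (hd.set_pairwise _) (S.measurableSet_biUnion fun i _ => ht i)
    (measure_ne_top_of_subset (iUnion₂_subset_iUnion _ _) hμU) c
  have hgap : Tendsto (fun S : Finset ι => μ ((⋃ i ∈ S, t i) ∆ ⋃ i, t i)) atTop (𝓝 0) := by
    simpa only [symmDiff_of_le (iUnion₂_subset_iUnion _ _)]
      using tendsto_measure_iUnion_sdiff_biUnion ht hμU
  exact (tendsto_indicatorConstLp_set hp hgap).congr fun S => (hpartial S).symm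

theorem integral_indicatorConstLp_one_mul (hs : MeasurableSet s) (hμs : μ s ≠ ∞) (g : α → ℝ) :
    ∫ a, indicatorConstLp p hs hμs (1 : ℝ) a * g a ∂μ = ∫ a in s, g a ∂μ := by
  rw [← integral_indicator hs]
  refine integral_congr_ae ?_
  filter_upwards [indicatorConstLp_coeFn (p := p) (hs := hs) (hμs := hμs) (c := (1 : ℝ))]
    with a ha
  simp only [ha, ← indicator_mul_left, one_mul]

theorem ContinuousLinearMap.ext_indicatorConstLp_one [Fact (1 ≤ p)] (hp : p ≠ ∞)
    {F : Type*} [NormedAddCommGroup F] [NormedSpace ℝ F] {φ ψ : Lp ℝ p μ →L[ℝ] F}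
    (h : ∀ ⦃s : Set α⦄ (hs : MeasurableSet s) (hμs : μ s ≠ ∞),
      φ (indicatorConstLp p hs hμs 1) = ψ (indicatorConstLp p hs hμs 1)) :
    φ = ψ := by
  ext f
  induction f using Lp.induction hp with
  | indicatorConst c hs hμs =>
    have hc : indicatorConstLp p hs hμs.ne c = c • indicatorConstLp p hs hμs.ne 1 := by
      simpa using indicatorConstLp_smul (p := p) hs hμs.ne c (1 : ℝ)
    rw [Lp.simpleFunc.coe_indicatorConst, hc, map_smul, map_smul, h hs hμs.ne]
  | add hf hg _ hφf hφg => rw [map_add, map_add, hφf, hφg]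
  | isClosed => exact isClosed_eq φ.continuous ψ.continuous

end IndicatorConstLp

section IntegralAgainstBounded

variable {α : Type*} [MeasurableSpace α] {μ : Measure α}

theorem ContinuousLinearMap.lpPairing_mul_apply {δ : α → ℝ} (hδ : MemLp δ ∞ μ)
    (f : Lp ℝ 1 μ) :
    (ContinuousLinearMap.mul ℝ ℝ).lpPairing μ ∞ 1 (hδ.toLp δ) f = ∫ a, f a * δ a ∂μ := by
  rw [lpPairing_eq_integral]
  refine integral_congr_ae ?_
  filter_upwards [hδ.coeFn_toLp] with a ha
  rw [mul_apply', ha, mul_comm]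

theorem norm_le_one_of_apply_eq_integral_mul {φ : StrongDual ℝ (Lp ℝ 1 μ)} {δ : α → ℝ}
    (hδ : ∀ᵐ a ∂μ, ‖δ a‖ ≤ 1) (hφ : ∀ f : Lp ℝ 1 μ, φ f = ∫ a, f a * δ a ∂μ) : ‖φ‖ ≤ 1 := by
  refine ContinuousLinearMap.opNorm_le_bound φ zero_le_one fun f => ?_
  rw [hφ, one_mul, L1.norm_eq_integral_norm]
  refine norm_integral_le_of_norm_le (L1.integrable_coeFn f).norm ?_
  filter_upwards [hδ] with a ha
  rw [norm_mul]
  exact mul_le_of_le_one_right (norm_nonneg _) ha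

end IntegralAgainstBounded

section SubmeasureFunctional

variable {α : Type*} [MeasurableSpace α] {μ : Measure α} {φ : StrongDual ℝ (Lp ℝ 1 μ)}

def IsSubmeasureFunctional (μ : Measure α) (φ : StrongDual ℝ (Lp ℝ 1 μ)) : Prop :=
  ∀ ⦃s : Set α⦄ (hs : MeasurableSet s) (hμs : μ s ≠ ∞),
    φ (indicatorConstLp 1 hs hμs 1) ∈ Icc 0 (μ.real s)

theorem isSubmeasureFunctional_of_apply_eq_integral_mul {δ : α → ℝ}
    (hδ : ∀ᵐ a ∂μ, δ a ∈ Icc 0 1) (hφ : ∀ f : Lp ℝ 1 μ, φ f = ∫ a, f a * δ a ∂μ) :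
    IsSubmeasureFunctional μ φ := by
  intro s hs hμs
  rw [hφ, integral_indicatorConstLp_one_mul]
  refine ⟨integral_nonneg_of_ae (ae_restrict_of_ae (hδ.mono fun a ha => ha.1)), ?_⟩
  have hle := norm_setIntegral_le_of_norm_le_const_ae' (C := 1) hμs.lt_top
    (hδ.mono fun a ha _ => by rw [Real.norm_of_nonneg ha.1]; exact ha.2)
  rw [one_mul] at hle
  exact (le_abs_self _).trans hle

theorem isClosed_setOf_isSubmeasureFunctional (μ : Measure α) :
    IsClosed {φ : WeakDual ℝ (Lp ℝ 1 μ) | IsSubmeasureFunctional μ (WeakDual.toStrongDual φ)} := by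
  simp only [IsSubmeasureFunctional, ofPred_forall]
  exact isClosed_iInter fun s => isClosed_iInter fun hs => isClosed_iInter fun hμs =>
    isClosed_Icc.preimage (WeakDual.eval_continuous _)

namespace IsSubmeasureFunctional

theorem ofReal_apply_eq_tsum (hφ : IsSubmeasureFunctional μ φ) {t : ℕ → Set α}
    (ht : ∀ i, MeasurableSet (t i)) (hμt : ∀ i, μ (t i) ≠ ∞) (hd : Pairwise (Disjoint on t))
    {s : Set α} (hs : MeasurableSet s) (hμs : μ s ≠ ∞) (hts : ⋃ i, t i = s) :
    ENNReal.ofReal (φ (indicatorConstLp 1 hs hμs 1)) =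
      ∑' i, ENNReal.ofReal (φ (indicatorConstLp 1 (ht i) (hμt i) 1)) := by
  subst hts
  have hsum := (hasSum_indicatorConstLp_iUnion ENNReal.one_ne_top ht hμt hd hμs
    (1 : ℝ)).mapL φ
  rw [← hsum.tsum_eq, ENNReal.ofReal_tsum_of_nonneg (fun i => (hφ _ _).1) hsum.summable]

variable [SigmaFinite μ]

/-- `φ 1ₛ` is only available when `μ s < ∞`, so a general `s` is cut along a partition of `α`
into pieces of finite measure. -/
def toMeasure (hφ : IsSubmeasureFunctional μ φ) : Measure α :=
  Measure.ofMeasurable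
    (fun s hs => ∑' n, ENNReal.ofReal (φ (indicatorConstLp 1
      (hs.inter (MeasurableSet.disjointed (measurableSet_spanningSets μ) n))
      (measure_inter_disjointed_spanningSets_ne_top s n) 1)))
    (by simp)
    (fun f hf hd => by
      rw [ENNReal.tsum_comm]
      refine tsum_congr fun n => ?_
      exact hφ.ofReal_apply_eq_tsum
        (fun i => (hf i).inter (MeasurableSet.disjointed (measurableSet_spanningSets μ) n))
        (fun i => measure_inter_disjointed_spanningSets_ne_top (f i) n)
        (fun i j hij => (hd hij).mono inter_subset_left inter_subset_left) _ _
        (iUnion_inter _ _).symm)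

theorem toMeasure_apply (hφ : IsSubmeasureFunctional μ φ) {s : Set α} (hs : MeasurableSet s)
    (hμs : μ s ≠ ∞) : hφ.toMeasure s = ENNReal.ofReal (φ (indicatorConstLp 1 hs hμs 1)) := by
  rw [toMeasure, Measure.ofMeasurable_apply s hs]
  exact (hφ.ofReal_apply_eq_tsum
    (fun n => hs.inter (MeasurableSet.disjointed (measurableSet_spanningSets μ) n))
    (fun n => measure_inter_disjointed_spanningSets_ne_top s n)
    (pairwise_disjoint_inter_disjointed_spanningSets s) hs hμs
    (iUnion_inter_disjointed_spanningSets s)).symm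

theorem toMeasure_le (hφ : IsSubmeasureFunctional μ φ) : hφ.toMeasure ≤ μ := by
  refine Measure.le_iff.2 fun s hs => ?_
  rw [toMeasure, Measure.ofMeasurable_apply s hs]
  calc _ ≤ ∑' n, μ (s ∩ disjointed (spanningSets μ) n) :=
        ENNReal.tsum_le_tsum fun n => ENNReal.ofReal_le_of_le_toReal (hφ _ _).2
    _ = μ (⋃ n, s ∩ disjointed (spanningSets μ) n) :=
        (measure_iUnion (pairwise_disjoint_inter_disjointed_spanningSets s)
          fun n => hs.inter (MeasurableSet.disjointed (measurableSet_spanningSets μ) n)).symm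
    _ = μ s := by rw [iUnion_inter_disjointed_spanningSets]

theorem exists_density (hφ : IsSubmeasureFunctional μ φ) :
    ∃ δ : α → ℝ, Measurable δ ∧ (∀ᵐ a ∂μ, δ a ∈ Icc 0 1) ∧
      ∀ f : Lp ℝ 1 μ, φ f = ∫ a, f a * δ a ∂μ := by
  set ν := hφ.toMeasure
  have hνμ : ν ≤ μ := hφ.toMeasure_le
  have : SigmaFinite ν := Measure.sigmaFinite_of_le μ hνμ
  set δ := fun a => (ν.rnDeriv μ a).toReal
  have hδ : ∀ᵐ a ∂μ, δ a ∈ Icc 0 1 := by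
    filter_upwards [Measure.rnDeriv_le_one_of_le hνμ] with a ha
    exact ⟨ENNReal.toReal_nonneg, ENNReal.toReal_le_of_le_ofReal zero_le_one (by simpa using ha)⟩
  have hδ_top : MemLp δ ∞ μ :=
    memLp_top_of_bound (Measure.measurable_rnDeriv ν μ).ennreal_toReal.aestronglyMeasurable 1
      (hδ.mono fun a ha => by rw [Real.norm_of_nonneg ha.1]; exact ha.2)
  have hφψ : φ = (ContinuousLinearMap.mul ℝ ℝ).lpPairing μ ∞ 1 (hδ_top.toLp δ) := by
    refine ContinuousLinearMap.ext_indicatorConstLp_one ENNReal.one_ne_top fun s hs hμs => ?_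
    rw [ContinuousLinearMap.lpPairing_mul_apply, integral_indicatorConstLp_one_mul,
      Measure.setIntegral_toReal_rnDeriv (Measure.absolutelyContinuous_of_le hνμ),
      measureReal_def, hφ.toMeasure_apply hs hμs, ENNReal.toReal_ofReal (hφ hs hμs).1]
  refine ⟨δ, (Measure.measurable_rnDeriv ν μ).ennreal_toReal, hδ, fun f => ?_⟩
  rw [hφψ, ContinuousLinearMap.lpPairing_mul_apply]

end IsSubmeasureFunctional
end SubmeasureFunctional

theorem classifierSet_eq : classifierSet =
    {φ | IsSubmeasureFunctional (volume : Measure ℝ) (WeakDual.toStrongDual φ)} := by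
  ext φ
  simp only [classifierSet, IsClassifier, mem_ofPred_eq]
  constructor
  · rintro ⟨δ, ⟨-, hδ⟩, hφ⟩
    exact isSubmeasureFunctional_of_apply_eq_integral_mul hδ hφ
  · intro hφ
    obtain ⟨δ, hδm, hδ, hφδ⟩ := hφ.exists_density
    exact ⟨δ, ⟨hδm, hδ⟩, hφδ⟩

theorem isCompact_classifierSet : IsCompact classifierSet := by
  have hbounded : Bornology.IsBounded classifierSet := by
    refine (Metric.isBounded_closedBall
      (x := (0 : StrongDual ℝ (Lp ℝ 1 (volume : Measure ℝ)))) (r := 1)).subset ?_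
    rintro φ ⟨δ, ⟨-, hδ⟩, hφ⟩
    rw [Metric.mem_closedBall, dist_zero_right]
    exact norm_le_one_of_apply_eq_integral_mul
      (hδ.mono fun a ha => by rw [Real.norm_of_nonneg ha.1]; exact ha.2) hφ
  exact WeakDual.isCompact_of_bounded_of_closed hbounded
    (classifierSet_eq ▸ isClosed_setOf_isSubmeasureFunctional (volume : Measure ℝ))

theorem zero_mem_classifierSet : (0 : WeakDual ℝ (Lp ℝ 1 (volume : Measure ℝ))) ∈ classifierSet :=
  ⟨0, ⟨measurable_const, ae_of_all _ fun _ => ⟨le_rfl, zero_le_one⟩⟩, fun _ => by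
    simp only [Pi.zero_apply, mul_zero, integral_zero]; rfl⟩

@[fun_prop]
theorem continuous_TPR (g₁ : Lp ℝ 1 (volume : Measure ℝ)) : Continuous (TPR g₁) :=
  WeakDual.eval_continuous g₁

@[fun_prop]
theorem continuous_FPR (g₀ : Lp ℝ 1 (volume : Measure ℝ)) : Continuous (FPR g₀) :=
  WeakDual.eval_continuous g₀

@[fun_prop]
theorem continuous_prevalence {F : ℝ → ℝ} (hF : Continuous F) (r : ℝ)
    (g₀ g₁ : Lp ℝ 1 (volume : Measure ℝ)) : Continuous (prevalence F r g₀ g₁) := by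
  unfold prevalence
  fun_prop

theorem continuous_rewardedShare {F : ℝ → ℝ} (hF : Continuous F) (r : ℝ)
    (g₀ g₁ : Lp ℝ 1 (volume : Measure ℝ)) : Continuous (rewardedShare F r g₀ g₁) := by
  unfold rewardedShare
  fun_prop

theorem continuous_designerPayoff {F : ℝ → ℝ} (hF : Continuous F) (r A₁ A₀ B₀ B₁ : ℝ)
    (g₀ g₁ : Lp ℝ 1 (volume : Measure ℝ)) :
    Continuous (designerPayoff F r A₁ A₀ B₀ B₁ g₀ g₁) := by
  unfold designerPayoff
  fun_prop

theorem rewardedShare_zero (F : ℝ → ℝ) (r : ℝ) (g₀ g₁ : Lp ℝ 1 (volume : Measure ℝ)) :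
    rewardedShare F r g₀ g₁ 0 = 0 :=
  show prevalence F r g₀ g₁ 0 * 0 + (1 - prevalence F r g₀ g₁ 0) * 0 = 0 by ring

theorem quota_feasible_compact_and_optimum_exists_general
    (g₀ g₁ : Lp ℝ 1 (volume : Measure ℝ))
    (F : ℝ → ℝ) (hF : Continuous F) (r : ℝ) (A₁ A₀ B₀ B₁ : ℝ)
    (q : ℝ) (hq : q ∈ Set.Ioc (0 : ℝ) 1) :
    ({φ ∈ classifierSet | rewardedShare F r g₀ g₁ φ ≤ q}).Nonempty ∧
    IsCompact {φ ∈ classifierSet | rewardedShare F r g₀ g₁ φ ≤ q} ∧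
    ∃ φstar ∈ {φ ∈ classifierSet | rewardedShare F r g₀ g₁ φ ≤ q},
      ∀ φ ∈ {φ ∈ classifierSet | rewardedShare F r g₀ g₁ φ ≤ q},
        designerPayoff F r A₁ A₀ B₀ B₁ g₀ g₁ φ ≤ designerPayoff F r A₁ A₀ B₀ B₁ g₀ g₁ φstar := by
  have hcompact : IsCompact {φ ∈ classifierSet | rewardedShare F r g₀ g₁ φ ≤ q} :=
    isCompact_classifierSet.inter_right
      (isClosed_le (continuous_rewardedShare hF r g₀ g₁) continuous_const)
  have hnonempty : ({φ ∈ classifierSet | rewardedShare F r g₀ g₁ φ ≤ q}).Nonempty :=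
    ⟨0, zero_mem_classifierSet, (rewardedShare_zero F r g₀ g₁).trans_le hq.1.le⟩
  obtain ⟨φstar, hφstar, hmax⟩ := hcompact.exists_isMaxOn hnonempty
    (continuous_designerPayoff hF r A₁ A₀ B₀ B₁ g₀ g₁).continuousOn
  exact ⟨hnonempty, hcompact, φstar, hφstar, fun φ hφ => hmax hφ⟩

/-- The quota-constrained designer problem admits an optimal classifier: for
probability densities `g₀, g₁ ∈ L¹(ℝ)`, continuous `F`, `r > 0`, payoff parameters,
and quota `q ∈ (0,1]`, the feasible set `D_q = {δ ∈ D : v(δ) ≤ q}` is nonempty and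
weak-* compact, and some `δ* ∈ D_q` maximizes `u_D` over `D_q`. -/
theorem quota_feasible_compact_and_optimum_exists
    (g₀ g₁ : Lp ℝ 1 (volume : Measure ℝ))
    (hg₀pos : 0 ≤ᵐ[(volume : Measure ℝ)] ⇑g₀) (hg₁pos : 0 ≤ᵐ[(volume : Measure ℝ)] ⇑g₁)
    (hg₀norm : ∫ s, g₀ s = 1) (hg₁norm : ∫ s, g₁ s = 1)
    (F : ℝ → ℝ) (hF : Continuous F) (r : ℝ) (hr : 0 < r) (A₁ A₀ B₀ B₁ : ℝ)
    (q : ℝ) (hq : q ∈ Set.Ioc (0 : ℝ) 1) :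
    ({φ ∈ classifierSet | rewardedShare F r g₀ g₁ φ ≤ q}).Nonempty ∧
    IsCompact {φ ∈ classifierSet | rewardedShare F r g₀ g₁ φ ≤ q} ∧
    ∃ φstar ∈ {φ ∈ classifierSet | rewardedShare F r g₀ g₁ φ ≤ q},
      ∀ φ ∈ {φ ∈ classifierSet | rewardedShare F r g₀ g₁ φ ≤ q},
        designerPayoff F r A₁ A₀ B₀ B₁ g₀ g₁ φ ≤ designerPayoff F r A₁ A₀ B₀ B₁ g₀ g₁ φstar :=
  quota_feasible_compact_and_optimum_exists_general g₀ g₁ F hF r A₁ A₀ B₀ B₁ q hq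

end
end

section
/- Let g₀, g₁ : ℝ → ℝ be continuous, strictly positive, Lebesgue-integrable functions with ∫_ℝ g₀ = ∫_ℝ g₁ = 1, and suppose s ↦ g₁(s)/g₀(s) is strictly increasing on ℝ (strict MLRP). Then for every τ ∈ ℝ, ∫_{τ}^{∞} g₁(s) ds > ∫_{τ}^{∞} g₀(s) ds; equivalently, ∫_{−∞}^{τ} g₁(s) ds < ∫_{−∞}^{τ} g₀(s) ds. In particular, every positive threshold rule δ_τ⁺ = 𝟙_{[τ,∞)} satisfies TPR(δ_τ⁺) − FPR(δ_τ⁺) > 0 and every negative threshold rule δ_τ⁻ = 𝟙_{(−∞,τ]} satisfies TPR(δ_τ⁻) − FPR(δ_τ⁻) < 0, where TPR(δ) = ∫ g₁ δ and FPR(δ) = ∫ g₀ δ. -/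
/-!
Put `c := g₁ τ / g₀ τ`. By strict MLRP, `g₁ > c g₀` to the right of `τ` and `g₁ < c g₀` to the
left, so integrating over the two tails gives `c a < b` and `b' < c a'`, where `a, a'` (resp.
`b, b'`) are the upper and lower tail masses of `g₀` (resp. `g₁`). Since `a + a' = b + b'`, either
`c ≥ 1` and `a ≤ c a < b`, or `c < 1` and `b' < c a' ≤ a'`; in both cases `a < b`.
-/

open MeasureTheory Set

theorem integral_mul_indicator_one {X : Type*} [MeasurableSpace X] {μ : Measure X}
    (g : X → ℝ) {t : Set X} (ht : MeasurableSet t) :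
    ∫ x, g x * t.indicator (fun _ => (1 : ℝ)) x ∂μ = ∫ x in t, g x ∂μ := by
  simp_rw [← indicator_mul_right, mul_one]
  exact integral_indicator ht

theorem setIntegral_lt_setIntegral_of_forall_lt {X : Type*} [MeasurableSpace X] {μ : Measure X}
    {s : Set X} {f g : X → ℝ} (hs : MeasurableSet s) (hμs : μ s ≠ 0)
    (hf : IntegrableOn f s μ) (hg : IntegrableOn g s μ) (hlt : ∀ x ∈ s, f x < g x) :
    ∫ x in s, f x ∂μ < ∫ x in s, g x ∂μ := by
  rw [← sub_pos, ← integral_sub hg hf, setIntegral_pos_iff_support_of_nonneg_ae]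
  · have hsupp : Function.support (fun x => g x - f x) ∩ s = s :=
      inter_eq_self_of_subset_right fun x hx => (sub_pos.2 (hlt x hx)).ne'
    rwa [hsupp, pos_iff_ne_zero]
  · exact (ae_restrict_iff' hs).2 (ae_of_all _ fun x hx => (sub_pos.2 (hlt x hx)).le)
  · exact hg.sub hf

theorem lt_of_mul_lt_of_lt_mul_of_add_eq {a a' b b' c : ℝ} (ha : 0 ≤ a) (ha' : 0 ≤ a')
    (hsum : a + a' = b + b') (hup : c * a < b) (hdown : b' < c * a') : a < b := by
  rcases le_or_gt 1 c with hc | hc <;> nlinarith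

theorem integral_Ici_lt_of_strictMono_div {g₀ g₁ : ℝ → ℝ} (hp₀ : ∀ s, 0 < g₀ s)
    (hi₀ : Integrable g₀) (hi₁ : Integrable g₁) (hn : ∫ s, g₀ s = ∫ s, g₁ s)
    (hmlrp : StrictMono fun s => g₁ s / g₀ s) (τ : ℝ) :
    ∫ s in Ici τ, g₀ s < ∫ s in Ici τ, g₁ s := by
  set c := g₁ τ / g₀ τ
  have hup : c * ∫ s in Ioi τ, g₀ s < ∫ s in Ioi τ, g₁ s := by
    rw [← integral_const_mul]
    refine setIntegral_lt_setIntegral_of_forall_lt measurableSet_Ioi (by simp)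
      (hi₀.const_mul c).integrableOn hi₁.integrableOn fun s hs => ?_
    exact (lt_div_iff₀ (hp₀ s)).1 (hmlrp hs)
  have hdown : ∫ s in Iio τ, g₁ s < c * ∫ s in Iio τ, g₀ s := by
    rw [← integral_const_mul]
    refine setIntegral_lt_setIntegral_of_forall_lt measurableSet_Iio (by simp)
      hi₁.integrableOn (hi₀.const_mul c).integrableOn fun s hs => ?_
    exact (div_lt_iff₀ (hp₀ s)).1 (hmlrp hs)
  have hsum : (∫ s in Ioi τ, g₀ s) + ∫ s in Iio τ, g₀ s
      = (∫ s in Ioi τ, g₁ s) + ∫ s in Iio τ, g₁ s := by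
    rw [← integral_Ici_eq_integral_Ioi, ← integral_Ici_eq_integral_Ioi, ← compl_Ici,
      integral_add_compl measurableSet_Ici hi₀, integral_add_compl measurableSet_Ici hi₁, hn]
  rw [integral_Ici_eq_integral_Ioi, integral_Ici_eq_integral_Ioi]
  exact lt_of_mul_lt_of_lt_mul_of_add_eq
    (setIntegral_nonneg measurableSet_Ioi fun s _ => (hp₀ s).le)
    (setIntegral_nonneg measurableSet_Iio fun s _ => (hp₀ s).le) hsum hup hdown

theorem integral_Iic_lt_of_strictMono_div {g₀ g₁ : ℝ → ℝ} (hp₀ : ∀ s, 0 < g₀ s)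
    (hi₀ : Integrable g₀) (hi₁ : Integrable g₁) (hn : ∫ s, g₀ s = ∫ s, g₁ s)
    (hmlrp : StrictMono fun s => g₁ s / g₀ s) (τ : ℝ) :
    ∫ s in Iic τ, g₁ s < ∫ s in Iic τ, g₀ s := by
  have hupper := integral_Ici_lt_of_strictMono_div hp₀ hi₀ hi₁ hn hmlrp τ
  have hsplit : ∀ g : ℝ → ℝ, Integrable g →
      ∫ s in Iic τ, g s = (∫ s, g s) - ∫ s in Ici τ, g s := fun g hg => by
    rw [eq_sub_iff_add_eq, integral_Iic_eq_integral_Iio, ← compl_Ici, add_comm,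
      integral_add_compl measurableSet_Ici hg]
  rw [hsplit g₀ hi₀, hsplit g₁ hi₁]
  linarith

theorem mlrp_threshold_rules_general
    (g₀ g₁ : ℝ → ℝ)
    (hp₀ : ∀ s, 0 < g₀ s)
    (hi₀ : Integrable g₀ (volume : Measure ℝ)) (hi₁ : Integrable g₁ (volume : Measure ℝ))
    (hn₀ : ∫ s, g₀ s = 1) (hn₁ : ∫ s, g₁ s = 1)
    (hmlrp : StrictMono fun s => g₁ s / g₀ s) :
    ∀ τ : ℝ,
      (∫ s in Ici τ, g₀ s) < (∫ s in Ici τ, g₁ s) ∧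
      (∫ s in Iic τ, g₁ s) < (∫ s in Iic τ, g₀ s) ∧
      (0 < (∫ s, g₁ s * (Ici τ).indicator (fun _ => (1 : ℝ)) s)
            - ∫ s, g₀ s * (Ici τ).indicator (fun _ => (1 : ℝ)) s) ∧
      ((∫ s, g₁ s * (Iic τ).indicator (fun _ => (1 : ℝ)) s)
            - (∫ s, g₀ s * (Iic τ).indicator (fun _ => (1 : ℝ)) s) < 0) := by
  intro τ
  have hn : ∫ s, g₀ s = ∫ s, g₁ s := hn₀.trans hn₁.symm
  have hupper := integral_Ici_lt_of_strictMono_div hp₀ hi₀ hi₁ hn hmlrp τ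
  have hlower := integral_Iic_lt_of_strictMono_div hp₀ hi₀ hi₁ hn hmlrp τ
  simp only [integral_mul_indicator_one _ measurableSet_Ici,
    integral_mul_indicator_one _ measurableSet_Iic, sub_pos, sub_neg]
  exact ⟨hupper, hlower, hupper, hlower⟩

/-- Under strict MLRP, upper-tail mass of `g₁` strictly exceeds that of `g₀`
(and lower-tail mass is strictly smaller); equivalently, every positive threshold
rule `𝟙_{[τ,∞)}` has `TPR − FPR > 0` and every negative threshold rule `𝟙_{(−∞,τ]}`
has `TPR − FPR < 0`. -/
theorem mlrp_threshold_rules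
    (g₀ g₁ : ℝ → ℝ) (hc₀ : Continuous g₀) (hc₁ : Continuous g₁)
    (hp₀ : ∀ s, 0 < g₀ s) (hp₁ : ∀ s, 0 < g₁ s)
    (hi₀ : Integrable g₀ (volume : Measure ℝ)) (hi₁ : Integrable g₁ (volume : Measure ℝ))
    (hn₀ : ∫ s, g₀ s = 1) (hn₁ : ∫ s, g₁ s = 1)
    (hmlrp : StrictMono fun s => g₁ s / g₀ s) :
    ∀ τ : ℝ,
      (∫ s in Ici τ, g₀ s) < (∫ s in Ici τ, g₁ s) ∧
      (∫ s in Iic τ, g₁ s) < (∫ s in Iic τ, g₀ s) ∧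
      (0 < (∫ s, g₁ s * (Ici τ).indicator (fun _ => (1 : ℝ)) s)
            - ∫ s, g₀ s * (Ici τ).indicator (fun _ => (1 : ℝ)) s) ∧
      ((∫ s, g₁ s * (Iic τ).indicator (fun _ => (1 : ℝ)) s)
            - (∫ s, g₀ s * (Iic τ).indicator (fun _ => (1 : ℝ)) s) < 0) :=
  mlrp_threshold_rules_general g₀ g₁ hp₀ hi₀ hi₁ hn₀ hn₁ hmlrp
end

section
/- Let g₀, g_χ, g₁ ∈ L¹(ℝ) be probability densities, let F : ℝ → ℝ be continuous, let r > 0, κ ∈ (0,1), and A₁, A₀, B₀, B₁ ∈ ℝ. For δ ∈ D define S_β(δ) = ∫ g_β δ for β ∈ {0, χ, 1}, Δ¹χ(δ) = S₁(δ) − S_χ(δ), Δ¹⁰(δ) = S₁(δ) − S₀(δ), Δχ⁰(δ) = S_χ(δ) − S₀(δ), F¹(δ) = F( min{ r·Δ¹⁰(δ), r·Δ¹χ(δ)/(1−κ) } ), F⁰(δ) = 1 − F( max{ r·Δ¹⁰(δ), r·Δχ⁰(δ)/κ } ), Fχ(δ) = 1 − F¹(δ) − F⁰(δ), and u_D(δ)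 = F¹(δ)·(S₁(δ)·A₁ + (1−S₁(δ))·A₀) + Fχ(δ)·(S_χ(δ)·B₀ + (1−S_χ(δ))·B₁) + F⁰(δ)·(S₀(δ)·B₀ + (1−S₀(δ))·B₁), and v(δ) = F¹(δ)·S₁(δ) + Fχ(δ)·S_χ(δ) + F⁰(δ)·S₀(δ). Then u_D and v are continuous on D in the weak-* topology of L∞(ℝ). -/
open MeasureTheory

noncomputable section

/-- `S_β(δ) = ∫ g_β δ`, realized as the pairing of the functional `φ` with
`g_β ∈ L¹(ℝ)`. -/
def S (g : Lp ℝ 1 (volume : Measure ℝ))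
    (φ : WeakDual ℝ (Lp ℝ 1 (volume : Measure ℝ))) : ℝ := φ g

/-- Equilibrium fraction of compliers:
`F¹(δ) = F(min{r·Δ¹⁰(δ), r·Δ¹χ(δ)/(1−κ)})`. -/
def fracComply (F : ℝ → ℝ) (r κ : ℝ) (g₀ gχ g₁ : Lp ℝ 1 (volume : Measure ℝ))
    (φ : WeakDual ℝ (Lp ℝ 1 (volume : Measure ℝ))) : ℝ :=
  F (min (r * (S g₁ φ - S g₀ φ)) (r * (S g₁ φ - S gχ φ) / (1 - κ)))

/-- Equilibrium fraction of noncompliers: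
`F⁰(δ) = 1 − F(max{r·Δ¹⁰(δ), r·Δχ⁰(δ)/κ})`. -/
def fracNoncomply (F : ℝ → ℝ) (r κ : ℝ) (g₀ gχ g₁ : Lp ℝ 1 (volume : Measure ℝ))
    (φ : WeakDual ℝ (Lp ℝ 1 (volume : Measure ℝ))) : ℝ :=
  1 - F (max (r * (S g₁ φ - S g₀ φ)) (r * (S gχ φ - S g₀ φ) / κ))

/-- Equilibrium fraction of cheaters: `Fχ(δ) = 1 − F¹(δ) − F⁰(δ)`. -/
def fracCheat (F : ℝ → ℝ) (r κ : ℝ) (g₀ gχ g₁ : Lp ℝ 1 (volume : Measure ℝ))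
    (φ : WeakDual ℝ (Lp ℝ 1 (volume : Measure ℝ))) : ℝ :=
  1 - fracComply F r κ g₀ gχ g₁ φ - fracNoncomply F r κ g₀ gχ g₁ φ

/-- Designer payoff in the model with cheating. -/
def designerPayoffCheat (F : ℝ → ℝ) (r κ A₁ A₀ B₀ B₁ : ℝ)
    (g₀ gχ g₁ : Lp ℝ 1 (volume : Measure ℝ))
    (φ : WeakDual ℝ (Lp ℝ 1 (volume : Measure ℝ))) : ℝ :=
  fracComply F r κ g₀ gχ g₁ φ * (S g₁ φ * A₁ + (1 - S g₁ φ) * A₀)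
    + fracCheat F r κ g₀ gχ g₁ φ * (S gχ φ * B₀ + (1 - S gχ φ) * B₁)
    + fracNoncomply F r κ g₀ gχ g₁ φ * (S g₀ φ * B₀ + (1 - S g₀ φ) * B₁)

/-- Expected rewarded share in the model with cheating. -/
def rewardedShareCheat (F : ℝ → ℝ) (r κ : ℝ)
    (g₀ gχ g₁ : Lp ℝ 1 (volume : Measure ℝ))
    (φ : WeakDual ℝ (Lp ℝ 1 (volume : Measure ℝ))) : ℝ :=
  fracComply F r κ g₀ gχ g₁ φ * S g₁ φ + fracCheat F r κ g₀ gχ g₁ φ * S gχ φ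
    + fracNoncomply F r κ g₀ gχ g₁ φ * S g₀ φ

/-- In the model with cheating, for probability densities `g₀, g_χ, g₁ ∈ L¹(ℝ)`,
continuous `F`, `r > 0`, `κ ∈ (0,1)`, and any payoff parameters, the designer payoff
`u_D` and the rewarded share `v` are continuous on `D` in the weak-* topology of
`L∞(ℝ) = (L¹(ℝ))*`. -/
theorem cheat_payoff_share_continuousOn
    (g₀ gχ g₁ : Lp ℝ 1 (volume : Measure ℝ))
    (hg₀pos : 0 ≤ᵐ[(volume : Measure ℝ)] ⇑g₀) (hgχpos : 0 ≤ᵐ[(volume : Measure ℝ)] ⇑gχ)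
    (hg₁pos : 0 ≤ᵐ[(volume : Measure ℝ)] ⇑g₁)
    (hg₀norm : ∫ s, g₀ s = 1) (hgχnorm : ∫ s, gχ s = 1) (hg₁norm : ∫ s, g₁ s = 1)
    (F : ℝ → ℝ) (hF : Continuous F) (r : ℝ) (hr : 0 < r)
    (κ : ℝ) (hκ : κ ∈ Set.Ioo (0 : ℝ) 1) (A₁ A₀ B₀ B₁ : ℝ) :
    ContinuousOn (designerPayoffCheat F r κ A₁ A₀ B₀ B₁ g₀ gχ g₁) classifierSet ∧
    ContinuousOn (rewardedShareCheat F r κ g₀ gχ g₁) classifierSet := by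
  have hS : ∀ g : Lp ℝ 1 (volume : Measure ℝ), Continuous (S g) := fun g =>
    WeakDual.eval_continuous g
  have h1 : Continuous (fracComply F r κ g₀ gχ g₁) := by
    unfold fracComply
    exact hF.comp (((continuous_const.mul ((hS g₁).sub (hS g₀)))).min
      (((continuous_const.mul ((hS g₁).sub (hS gχ)))).div_const _))
  have h0 : Continuous (fracNoncomply F r κ g₀ gχ g₁) := by
    unfold fracNoncomply
    exact continuous_const.sub (hF.comp
      (((continuous_const.mul ((hS g₁).sub (hS g₀)))).max
      (((continuous_const.mul ((hS gχ).sub (hS g₀)))).div_const _)))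
  have hχ : Continuous (fracCheat F r κ g₀ gχ g₁) := by
    unfold fracCheat
    exact (continuous_const.sub h1).sub h0
  constructor
  · apply Continuous.continuousOn
    unfold designerPayoffCheat
    exact ((h1.mul (((hS g₁).mul continuous_const).add
        ((continuous_const.sub (hS g₁)).mul continuous_const))).add
      (hχ.mul (((hS gχ).mul continuous_const).add
        ((continuous_const.sub (hS gχ)).mul continuous_const)))).add
      (h0.mul (((hS g₀).mul continuous_const).add
        ((continuous_const.sub (hS g₀)).mul continuous_const)))
  · apply Continuous.continuousOn
    unfold rewardedShareCheat
    exact ((h1.mul (hS g₁)).add (hχ.mul (hS gχ))).add (h0.mul (hS g₀))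

end
end
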